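/- Let (A_i)_{i∈I} be a family of commutative rings and suppose there exist constants μ(d) ∈ ℕ for each d ∈ ℕ such that every finitely generated projective A_i-module of constant rank d can be generated by at most μ(d) elements, for all i. Then every family (M_i)_{i∈I}, where each M_i is a finitely generated projective A_i-module of the same constant rank d, admits a family of surjections A_i^{μ(d)} → M_i, and hence the corresponding object of the product category ∏_i Mod_{A_i}^fp is a direct summand of the μ(d)-fold direct sum of the unit object (A_i)_{i∈I}. Moreover, every epimorphism in ∏_i Mod_{A_i}^fp onto such a family of projective modules is split. -/
import Mathlib


open Function

/-- Let `(Aᵢ)` be a family of commutative rings such that every finitely generated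
projective `Aᵢ`-module of constant rank `d` can be generated by `μ(d)` elements.
Then every family `(Mᵢ)` of finitely generated projective modules of the same
constant rank `d` admits a family of surjections `Aᵢ^{μ(d)} → Mᵢ` which split, so the
corresponding object of `∏ᵢ Mod_{Aᵢ}^{fp}` is a direct summand of the `μ(d)`-fold
direct sum of the unit object; moreover every epimorphism of the product category
onto such a family splits. -/
theorem stmt_19 {ι : Type} (A : ι → Type) [∀ i, CommRing (A i)] (μ : ℕ → ℕ)
    (hμ : ∀ (i : ι) (d : ℕ) (M₀ : Type) (_ : AddCommGroup M₀) (_ : Module (A i) M₀),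
      Module.Finite (A i) M₀ → Module.Projective (A i) M₀ →
      (∀ (P : Ideal (A i)) [P.IsPrime],
        Module.finrank (Localization.AtPrime P) (LocalizedModule P.primeCompl M₀) = d) →
      ∃ p : (Fin (μ d) → A i) →ₗ[A i] M₀, Surjective p)
    (d : ℕ) (M : ι → Type) [∀ i, AddCommGroup (M i)] [∀ i, Module (A i) (M i)]
    [∀ i, Module.Finite (A i) (M i)] [∀ i, Module.Projective (A i) (M i)]
    (hrank : ∀ (i : ι) (P : Ideal (A i)) [P.IsPrime],
      Module.finrank (Localization.AtPrime P) (LocalizedModule P.primeCompl (M i)) = d) :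
    (∃ (p : ∀ i, (Fin (μ d) → A i) →ₗ[A i] M i)
        (s : ∀ i, M i →ₗ[A i] (Fin (μ d) → A i)),
      (∀ i, Surjective (p i)) ∧ ∀ i, (p i).comp (s i) = LinearMap.id) ∧
    (∀ (K : ι → Type) (_ : ∀ i, AddCommGroup (K i)) (_ : ∀ i, Module (A i) (K i))
        (_ : ∀ i, Module.Finite (A i) (K i))
        (q : ∀ i, K i →ₗ[A i] M i), (∀ i, Surjective (q i)) →
      ∃ s : ∀ i, M i →ₗ[A i] K i, ∀ i, (q i).comp (s i) = LinearMap.id) := by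
  constructor
  · choose p hp using fun i => hμ i d (M i) _ _ inferInstance inferInstance (hrank i)
    choose s hs using fun i =>
      Module.projective_lifting_property (p i) LinearMap.id (hp i)
    exact ⟨p, s, hp, hs⟩
  · intro K _ _ _ q hq
    choose s hs using fun i =>
      Module.projective_lifting_property (q i) LinearMap.id (hq i)
    exact ⟨s, hs⟩
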